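/- arXiv:1806.06921 — 2 statements merged into one kernel-verified Lean document; each statement's English description precedes it below -/
import Mathlib

section
/- The saddle solution u(x,y) = 4·arctan( cosh(y/√2) / cosh(x/√2) ) − π satisfies −Δu = sin u at every point of ℝ², and |u(x,y)| < π for all (x,y) ∈ ℝ². Moreover u vanishes exactly on the two lines y = x and y = −x. -/
/-!
With `c s = cosh (s / a)` one has `c'' = c / a ^ 2` and `a ^ 2 c' ^ 2 = c ^ 2 - 1`, and these two
identities make `u x y = 4 arctan (c y / c x) - π` solve `-Δu = (2 / a ^ 2) sin u`, via
`sin (4 arctan t) = 4 t (1 - t ^ 2) / (1 + t ^ 2) ^ 2`; the saddle solution is the case `a = √2`.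
Since `arctan t⁻¹ = π / 2 - arctan t`, swapping the variables negates `u`, so only `∂ₓ² u` has to
be computed. As `0 < arctan t < π / 2` for `t > 0`, and `arctan t = π / 4` only at `t = 1`, `|u| < π`
and `u` vanishes exactly where `cosh (y / a) = cosh (x / a)`, i.e. `|y| = |x|`.
-/

/-- Partial derivative in the first variable of a function of two real variables. -/
noncomputable def pdx (u : ℝ → ℝ → ℝ) (x y : ℝ) : ℝ := deriv (fun s => u s y) x

/-- Partial derivative in the second variable of a function of two real variables. -/
noncomputable def pdy (u : ℝ → ℝ → ℝ) (x y : ℝ) : ℝ := deriv (fun t => u x t) y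

/-- The Laplacian of a function of two real variables. -/
noncomputable def lap (u : ℝ → ℝ → ℝ) (x y : ℝ) : ℝ := pdx (pdx u) x y + pdy (pdy u) x y

/-- The saddle solution of the elliptic sine-Gordon equation. -/
noncomputable def saddle (x y : ℝ) : ℝ :=
  4 * Real.arctan (Real.cosh (y / Real.sqrt 2) / Real.cosh (x / Real.sqrt 2)) - Real.pi

open Real

noncomputable def scaledSaddle (a x y : ℝ) : ℝ :=
  4 * arctan (cosh (y / a) / cosh (x / a)) - π

theorem saddle_eq_scaledSaddle : saddle = scaledSaddle √2 := rfl

theorem pdy_pdy_eq_pdx_pdx_flip (u : ℝ → ℝ → ℝ) (x y : ℝ) :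
    pdy (pdy u) x y = pdx (pdx (flip u)) y x := rfl

theorem pdx_neg (u : ℝ → ℝ → ℝ) : pdx (-u) = -pdx u := by
  funext x y
  exact deriv.fun_neg

theorem lap_of_flip_eq_neg {u : ℝ → ℝ → ℝ} (hu : flip u = -u) (x y : ℝ) :
    lap u x y = pdx (pdx u) x y - pdx (pdx u) y x := by
  rw [lap, pdy_pdy_eq_pdx_pdx_flip, hu, pdx_neg, pdx_neg, sub_eq_add_neg]
  rfl

theorem flip_scaledSaddle (a : ℝ) : flip (scaledSaddle a) = -scaledSaddle a := by
  funext x y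
  have hpos : 0 < cosh (y / a) / cosh (x / a) := div_pos (cosh_pos _) (cosh_pos _)
  simp only [flip, Pi.neg_apply, scaledSaddle]
  rw [← inv_div, arctan_inv_of_pos hpos]
  ring

theorem hasDerivAt_cosh_div (a x : ℝ) :
    HasDerivAt (fun s => cosh (s / a)) (sinh (x / a) / a) x := by
  simpa [div_eq_mul_inv] using ((hasDerivAt_id x).div_const a).cosh

theorem hasDerivAt_sinh_div (a x : ℝ) :
    HasDerivAt (fun s => sinh (s / a)) (cosh (x / a) / a) x := by
  simpa [div_eq_mul_inv] using ((hasDerivAt_id x).div_const a).sinh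

theorem hasDerivAt_scaledSaddle_fst (a x y : ℝ) :
    HasDerivAt (fun s => scaledSaddle a s y)
      (-(4 * cosh (y / a) * sinh (x / a)) / (a * (cosh (x / a) ^ 2 + cosh (y / a) ^ 2))) x := by
  have hx := (cosh_pos (x / a)).ne'
  have hq := ((hasDerivAt_const x (cosh (y / a))).fun_div (hasDerivAt_cosh_div a x) hx).arctan
  refine ((hq.const_mul 4).sub_const π).congr_deriv ?_
  field_simp
  ring

theorem pdx_scaledSaddle (a : ℝ) : pdx (scaledSaddle a) = fun x y =>
    -(4 * cosh (y / a) * sinh (x / a)) / (a * (cosh (x / a) ^ 2 + cosh (y / a) ^ 2)) := by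
  funext x y
  exact (hasDerivAt_scaledSaddle_fst a x y).deriv

theorem pdx_pdx_scaledSaddle {a : ℝ} (ha : a ≠ 0) (x y : ℝ) :
    pdx (pdx (scaledSaddle a)) x y =
      -(4 * cosh (y / a) * cosh (x / a) * (cosh (y / a) ^ 2 - cosh (x / a) ^ 2 + 2)) /
        (a ^ 2 * (cosh (x / a) ^ 2 + cosh (y / a) ^ 2) ^ 2) := by
  have hD : a * (cosh (x / a) ^ 2 + cosh (y / a) ^ 2) ≠ 0 := by positivity
  have hnum : HasDerivAt (fun s => -(4 * cosh (y / a) * sinh (s / a)))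
      (-(4 * cosh (y / a) * (cosh (x / a) / a))) x :=
    ((hasDerivAt_sinh_div a x).const_mul _).fun_neg
  have hden : HasDerivAt (fun s => a * (cosh (s / a) ^ 2 + cosh (y / a) ^ 2))
      (a * (2 * cosh (x / a) * (sinh (x / a) / a))) x := by
    simpa using (((hasDerivAt_cosh_div a x).fun_pow 2).add_const (cosh (y / a) ^ 2)).const_mul a
  rw [pdx_scaledSaddle, pdx]
  refine ((hnum.div hden hD).deriv).trans ?_
  have hsinh := cosh_sq_sub_sinh_sq (x / a)
  field_simp
  linear_combination -2 * hsinh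

theorem sin_four_mul_arctan (t : ℝ) :
    sin (4 * arctan t) = 4 * t * (1 - t ^ 2) / (1 + t ^ 2) ^ 2 := by
  have hsin : sin (arctan t) = t * cos (arctan t) := by
    rw [sin_arctan, cos_arctan]; ring
  have hcos := cos_sq_arctan t
  rw [show 4 * arctan t = 2 * (2 * arctan t) by ring, sin_two_mul, sin_two_mul, cos_two_mul, hsin]
  field_simp
  rw [hcos]
  field_simp
  ring

theorem lap_scaledSaddle {a : ℝ} (ha : a ≠ 0) (x y : ℝ) :
    lap (scaledSaddle a) x y =
      8 * cosh (x / a) * cosh (y / a) * (cosh (x / a) ^ 2 - cosh (y / a) ^ 2) /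
        (a ^ 2 * (cosh (x / a) ^ 2 + cosh (y / a) ^ 2) ^ 2) := by
  rw [lap_of_flip_eq_neg (flip_scaledSaddle a), pdx_pdx_scaledSaddle ha, pdx_pdx_scaledSaddle ha]
  field_simp
  ring

theorem sin_scaledSaddle (a x y : ℝ) :
    sin (scaledSaddle a x y) =
      -(4 * cosh (x / a) * cosh (y / a) * (cosh (x / a) ^ 2 - cosh (y / a) ^ 2)) /
        (cosh (x / a) ^ 2 + cosh (y / a) ^ 2) ^ 2 := by
  rw [scaledSaddle, sin_sub_pi, sin_four_mul_arctan]
  field_simp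

theorem neg_lap_scaledSaddle {a : ℝ} (ha : a ≠ 0) (x y : ℝ) :
    -lap (scaledSaddle a) x y = 2 / a ^ 2 * sin (scaledSaddle a x y) := by
  rw [lap_scaledSaddle ha, sin_scaledSaddle]
  field_simp
  ring

theorem abs_four_mul_arctan_sub_pi_lt {t : ℝ} (ht : 0 < t) : |4 * arctan t - π| < π := by
  have hpos := arctan_pos.2 ht
  have hlt := arctan_lt_pi_div_two t
  rw [abs_lt]
  constructor <;> linarith

theorem abs_scaledSaddle_lt (a x y : ℝ) : |scaledSaddle a x y| < π :=
  abs_four_mul_arctan_sub_pi_lt (div_pos (cosh_pos _) (cosh_pos _))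

theorem four_mul_arctan_sub_pi_eq_zero_iff {t : ℝ} : 4 * arctan t - π = 0 ↔ t = 1 := by
  rw [← arctan_eq_pi_div_four]
  constructor <;> intro h <;> linarith

theorem cosh_eq_cosh_iff {x y : ℝ} : cosh x = cosh y ↔ |x| = |y| := by
  simp only [le_antisymm_iff, cosh_le_cosh]

theorem scaledSaddle_eq_zero_iff {a : ℝ} (ha : a ≠ 0) (x y : ℝ) :
    scaledSaddle a x y = 0 ↔ y = x ∨ y = -x := by
  rw [scaledSaddle, four_mul_arctan_sub_pi_eq_zero_iff, div_eq_one_iff_eq (cosh_pos _).ne',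
    cosh_eq_cosh_iff, abs_div, abs_div, div_left_inj' (abs_ne_zero.2 ha), abs_eq_abs]

theorem saddle_solves_sineGordon_and_nodal_set :
    ∀ x y : ℝ,
      (-(lap saddle x y) = Real.sin (saddle x y)) ∧
      |saddle x y| < Real.pi ∧
      (saddle x y = 0 ↔ (y = x ∨ y = -x)) := by
  intro x y
  have hsqrt2 : √2 ≠ 0 := by positivity
  rw [saddle_eq_scaledSaddle]
  refine ⟨?_, abs_scaledSaddle_lt _ x y, scaledSaddle_eq_zero_iff hsqrt2 x y⟩
  rw [neg_lap_scaledSaddle hsqrt2, sq_sqrt zero_le_two, div_self two_ne_zero, one_mul]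
end

section
/- Let p, q > 0 with p² + q² = 1. In the Hirota two-soliton formula take n = 2 with parameters p₁ = p₂ = p, q₁ = q, q₂ = −q and η₁⁰ = η₂⁰ = ln(q/p). Then for all (x,y) ∈ ℝ²: f(x,y) = 1 + e^{2px}, g(x,y) = 2(p/q)·e^{px}·cosh(qy), and 4·arctan(g(x,y)/f(x,y)) − π = 4·arctan((p·cosh(qy))/(q·cosh(px))) − π; that is, the four-end solution φ_{p,q} belongs to the Hirota family U₂ − π. -/
/-! The shift `η⁰ = log (q/p)` divides each `e^{η_j}` by `q/p`, which the interaction coefficient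
`α(1,2) = q²/p²` exactly undoes in `f`, so `f = 1 + e^{2px}`, while `g = (p/q) e^{px} (e^{-qy} + e^{qy})`.
Writing `1 + e^{2px} = 2 e^{px} cosh (px)` then turns `g/f` into `p cosh (qy) / (q cosh (px))`. -/

open Finset

/-- The phase functions of the Hirota ansatz. -/
noncomputable def etaPhase {n : ℕ} (p q η0 : Fin n → ℝ) (j : Fin n) (x y : ℝ) : ℝ :=
  p j * x - q j * y - η0 j

/-- The interaction coefficients of the Hirota ansatz. -/
noncomputable def alphaCoef {n : ℕ} (p q : Fin n → ℝ) (j k : Fin n) : ℝ :=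
  (((p j - p k) ^ 2 + (q j - q k) ^ 2)) / (((p j + p k) ^ 2 + (q j + q k) ^ 2))

/-- The coefficient `a(S) = ∏_{j<k, j,k ∈ S} α(j,k)` (empty products equal `1`). -/
noncomputable def aCoef {n : ℕ} (p q : Fin n → ℝ) (S : Finset (Fin n)) : ℝ :=
  ∏ j ∈ S, ∏ k ∈ S.filter (fun k => j < k), alphaCoef p q j k

/-- The function `f` of the Hirota ansatz: sum over subsets of even cardinality. -/
noncomputable def hirotaF (n : ℕ) (p q η0 : Fin n → ℝ) (x y : ℝ) : ℝ :=
  ∑ S ∈ (Finset.univ : Finset (Fin n)).powerset.filter (fun S => Even S.card),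
    aCoef p q S * Real.exp (∑ j ∈ S, etaPhase p q η0 j x y)

/-- The function `g` of the Hirota ansatz: sum over subsets of odd cardinality. -/
noncomputable def hirotaG (n : ℕ) (p q η0 : Fin n → ℝ) (x y : ℝ) : ℝ :=
  ∑ S ∈ (Finset.univ : Finset (Fin n)).powerset.filter (fun S => Odd S.card),
    aCoef p q S * Real.exp (∑ j ∈ S, etaPhase p q η0 j x y)

/-- The Hirota `n`-soliton function `U_n = 4 arctan (g/f)`. -/
noncomputable def hirotaU (n : ℕ) (p q η0 : Fin n → ℝ) (x y : ℝ) : ℝ :=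
  4 * Real.arctan (hirotaG n p q η0 x y / hirotaF n p q η0 x y)

section TwoSoliton

variable (p q η0 : Fin 2 → ℝ) (x y : ℝ)

theorem hirotaF_two :
    hirotaF 2 p q η0 x y =
      1 + alphaCoef p q 0 1 * Real.exp (etaPhase p q η0 0 x y + etaPhase p q η0 1 x y) := by
  have hEven : (univ : Finset (Fin 2)).powerset.filter (fun S => Even S.card) = {∅, univ} := by
    decide
  have hpair : univ.filter (fun k : Fin 2 => 0 < k) = {1} := by decide
  have hlast : univ.filter (fun k : Fin 2 => 1 < k) = ∅ := by decide
  rw [hirotaF, hEven, sum_pair (by decide)]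
  simp [aCoef, Fin.prod_univ_two, Fin.sum_univ_two, hpair, hlast]

theorem hirotaG_two :
    hirotaG 2 p q η0 x y = Real.exp (etaPhase p q η0 0 x y) + Real.exp (etaPhase p q η0 1 x y) := by
  have hOdd : (univ : Finset (Fin 2)).powerset.filter (fun S => Odd S.card) = {{0}, {1}} := by
    decide
  rw [hirotaG, hOdd, sum_pair (by decide)]
  simp [aCoef, filter_singleton]

end TwoSoliton

theorem alphaCoef_fourEnd (p q : ℝ) : alphaCoef ![p, p] ![q, -q] 0 1 = q ^ 2 / p ^ 2 := by
  simp only [alphaCoef, Matrix.cons_val_zero, Matrix.cons_val_one, Matrix.cons_val_fin_one]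
  by_cases hp : p = 0
  · simp [hp]
  · field_simp
    ring

theorem Real.one_add_exp_two_mul (t : ℝ) : 1 + Real.exp (2 * t) = 2 * Real.exp t * Real.cosh t := by
  rw [Real.cosh_eq, two_mul, Real.exp_add, Real.exp_neg]
  field_simp
  ring

theorem Real.exp_sub_log {c : ℝ} (hc : 0 < c) (a : ℝ) :
    Real.exp (a - Real.log c) = Real.exp a / c := by
  rw [Real.exp_sub, Real.exp_log hc]

theorem fourEnd_is_in_hirota_family_general (p q : ℝ) (hp : 0 < p) (hq : 0 < q) :
    let pv : Fin 2 → ℝ := ![p, p]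
    let qv : Fin 2 → ℝ := ![q, -q]
    let η0 : Fin 2 → ℝ := ![Real.log (q / p), Real.log (q / p)]
    ∀ x y : ℝ,
      hirotaF 2 pv qv η0 x y = 1 + Real.exp (2 * p * x) ∧
      hirotaG 2 pv qv η0 x y = 2 * (p / q) * Real.exp (p * x) * Real.cosh (q * y) ∧
      4 * Real.arctan (hirotaG 2 pv qv η0 x y / hirotaF 2 pv qv η0 x y) - Real.pi =
        4 * Real.arctan ((p * Real.cosh (q * y)) / (q * Real.cosh (p * x))) - Real.pi := by
  intro pv qv η0 x y
  have hphases : Real.exp (etaPhase pv qv η0 0 x y) = Real.exp (p * x - q * y) / (q / p) ∧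
      Real.exp (etaPhase pv qv η0 1 x y) = Real.exp (p * x + q * y) / (q / p) := by
    simp [etaPhase, pv, qv, η0, ← Real.exp_sub_log (div_pos hq hp)]
  have hF : hirotaF 2 pv qv η0 x y = 1 + Real.exp (2 * p * x) := by
    rw [hirotaF_two, alphaCoef_fourEnd, Real.exp_add, hphases.1, hphases.2, div_mul_div_comm,
      ← Real.exp_add]
    field_simp
    ring_nf
  have hG : hirotaG 2 pv qv η0 x y = 2 * (p / q) * Real.exp (p * x) * Real.cosh (q * y) := by
    rw [hirotaG_two, hphases.1, hphases.2, Real.cosh_eq, sub_eq_add_neg, Real.exp_add,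
      Real.exp_add]
    field_simp
    ring
  have hratio : 2 * (p / q) * Real.exp (p * x) * Real.cosh (q * y) / (1 + Real.exp (2 * p * x))
      = p * Real.cosh (q * y) / (q * Real.cosh (p * x)) := by
    rw [mul_assoc 2 p x, Real.one_add_exp_two_mul]
    field_simp
  exact ⟨hF, hG, by rw [hF, hG, hratio]⟩

theorem fourEnd_is_in_hirota_family (p q : ℝ) (hp : 0 < p) (hq : 0 < q)
    (hpq : p ^ 2 + q ^ 2 = 1) :
    let pv : Fin 2 → ℝ := ![p, p]
    let qv : Fin 2 → ℝ := ![q, -q]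
    let η0 : Fin 2 → ℝ := ![Real.log (q / p), Real.log (q / p)]
    ∀ x y : ℝ,
      hirotaF 2 pv qv η0 x y = 1 + Real.exp (2 * p * x) ∧
      hirotaG 2 pv qv η0 x y = 2 * (p / q) * Real.exp (p * x) * Real.cosh (q * y) ∧
      4 * Real.arctan (hirotaG 2 pv qv η0 x y / hirotaF 2 pv qv η0 x y) - Real.pi =
        4 * Real.arctan ((p * Real.cosh (q * y)) / (q * Real.cosh (p * x))) - Real.pi :=
  fourEnd_is_in_hirota_family_general p q hp hq
end
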